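/- arXiv:2406.01074 — 6 statements merged into one kernel-verified Lean document; each statement's English description precedes it below -/
import Mathlib

section
/- Let G be a group, ψ ∈ Aut(G), and Q = Q(G, ψ). Let P be the orbit of the identity element e under the inner automorphism group Inn(Q) (the group generated by all point symmetries s_x). Then P is a subgroup of G. -/
/-- The generalized Alexander quandle operation on a group `G` with automorphism `ψ`. -/
def gaOp {G : Type*} [Group G] (ψ : G ≃* G) (x y : G) : G := y * ψ (y⁻¹ * x)

/-- The point symmetry `s_y : x ↦ x * y = y·ψ(y⁻¹x)` as a permutation of `G`. -/
def ptSym {G : Type*} [Group G] (ψ : G ≃* G) (y : G) : Equiv.Perm G :=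
  (Equiv.mulLeft y⁻¹).trans (ψ.toEquiv.trans (Equiv.mulLeft y))

/-- The inner automorphism group of `Q(G,ψ)`: the group of permutations of `G`
generated by the point symmetries. -/
def innGroup {G : Type*} [Group G] (ψ : G ≃* G) : Subgroup (Equiv.Perm G) :=
  Subgroup.closure (Set.range (ptSym ψ))

/-- `P(Q(G,ψ))`: the orbit of the identity element under `Inn(Q(G,ψ))`. -/
def innOrbit {G : Type*} [Group G] (ψ : G ≃* G) : Set G :=
  {g | ∃ f ∈ innGroup ψ, f 1 = g}

theorem innOrbit_is_subgroup {G : Type*} [Group G] (ψ : G ≃* G) :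
    ∃ H : Subgroup G, (H : Set G) = innOrbit ψ := by
  classical
  -- basic formulas
  have hsyform : ∀ y x : G, ptSym ψ y x = (y * (ψ y)⁻¹) * ψ x := by
    intro y x
    simp [ptSym, map_mul, mul_assoc]
  have hΦ : ∀ x : G, ptSym ψ 1 x = ψ x := by
    intro x; simp [ptSym]
  have hΦmem : ptSym ψ 1 ∈ innGroup ψ := Subgroup.subset_closure ⟨1, rfl⟩
  have hsy : ∀ y : G, ptSym ψ y ∈ innGroup ψ := fun y =>
    Subgroup.subset_closure ⟨y, rfl⟩
  have hΦinv : ∀ x : G, (ptSym ψ 1)⁻¹ x = ψ.symm x := by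
    intro x
    apply (ptSym ψ 1).injective
    rw [Equiv.Perm.coe_inv, Equiv.apply_symm_apply, hΦ]
    simp
  -- inverse formula for affine maps
  have hinvform : ∀ (f : Equiv.Perm G) (a : G), (∀ x, f x = a * ψ x) →
      ∀ z : G, f⁻¹ z = ψ.symm (a⁻¹ * z) := by
    intro f a hfa z
    apply f.injective
    rw [Equiv.Perm.coe_inv, Equiv.apply_symm_apply, hfa]
    simp
  -- the candidate subgroup
  set T : Set G := {k | ∃ f, f ∈ innGroup ψ ∧ ∀ x, f x = k * ψ x} with hTdef
  have hone : (1 : G) ∈ T := ⟨ptSym ψ 1, hΦmem, fun x => by rw [hΦ, one_mul]⟩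
  have hmul : ∀ a ∈ T, ∀ b ∈ T, a * b ∈ T := by
    rintro a ⟨f, hf, hfx⟩ b ⟨g, hg, hgx⟩
    refine ⟨f * (ptSym ψ 1)⁻¹ * g, mul_mem (mul_mem hf (inv_mem hΦmem)) hg, fun x => ?_⟩
    rw [Equiv.Perm.mul_apply, Equiv.Perm.mul_apply, hgx, hΦinv, hfx]
    simp [mul_assoc]
  have hinv : ∀ a ∈ T, a⁻¹ ∈ T := by
    rintro a ⟨f, hf, hfx⟩
    refine ⟨ptSym ψ 1 * f⁻¹ * ptSym ψ 1, mul_mem (mul_mem hΦmem (inv_mem hf)) hΦmem,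
      fun x => ?_⟩
    rw [Equiv.Perm.mul_apply, Equiv.Perm.mul_apply, hΦ, hinvform f a hfx, hΦ]
    simp
  -- ψ-stability of T
  have hpsi : ∀ k ∈ T, ψ k ∈ T := by
    rintro k ⟨f, hf, hfx⟩
    refine ⟨ptSym ψ 1 * f * (ptSym ψ 1)⁻¹, mul_mem (mul_mem hΦmem hf) (inv_mem hΦmem),
      fun x => ?_⟩
    rw [Equiv.Perm.mul_apply, Equiv.Perm.mul_apply, hΦinv, hfx, hΦ]
    simp [map_mul]
  have hpsiInv : ∀ k ∈ T, ψ.symm k ∈ T := by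
    rintro k ⟨f, hf, hfx⟩
    refine ⟨(ptSym ψ 1)⁻¹ * f * ptSym ψ 1, mul_mem (mul_mem (inv_mem hΦmem) hf) hΦmem,
      fun x => ?_⟩
    rw [Equiv.Perm.mul_apply, Equiv.Perm.mul_apply, hΦ, hfx, hΦinv]
    simp [map_mul]
  -- base points in T
  have hbase : ∀ y : G, y * (ψ y)⁻¹ ∈ T := fun y => ⟨ptSym ψ y, hsy y, hsyform y⟩
  -- key: every element of innGroup preserves T (both ways)
  have key : ∀ f ∈ innGroup ψ, (∀ k ∈ T, f k ∈ T) ∧ (∀ k ∈ T, f⁻¹ k ∈ T) := by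
    intro f hf
    refine Subgroup.closure_induction (fun g hg => ?_) ?_
      (fun g₁ g₂ _ _ ih₁ ih₂ => ?_) (fun g _ ih => ?_) hf
    · obtain ⟨y, rfl⟩ := hg
      constructor
      · intro k hk
        rw [hsyform]
        exact hmul _ (hbase y) _ (hpsi k hk)
      · intro k hk
        rw [hinvform (ptSym ψ y) (y * (ψ y)⁻¹) (hsyform y) k, map_mul]
        exact hmul _ (hpsiInv _ (hinv _ (hbase y))) _ (hpsiInv k hk)
    · simp only [inv_one]; exact ⟨fun k hk => hk, fun k hk => hk⟩
    · constructor
      · intro k hk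
        rw [Equiv.Perm.mul_apply]
        exact ih₁.1 _ (ih₂.1 k hk)
      · intro k hk
        rw [mul_inv_rev, Equiv.Perm.mul_apply]
        exact ih₂.2 _ (ih₁.2 k hk)
    · exact ⟨fun k hk => ih.2 k hk, fun k hk => by simpa using ih.1 k hk⟩
  refine ⟨{ carrier := T, one_mem' := hone,
            mul_mem' := fun ha hb => hmul _ ha _ hb,
            inv_mem' := fun ha => hinv _ ha }, ?_⟩
  ext g
  constructor
  · rintro ⟨f, hf, hfx⟩
    exact ⟨f, hf, by rw [hfx]; simp⟩
  · rintro ⟨f, hf, rfl⟩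
    exact (key f hf).1 1 hone
end

section
/- Let G be a group, ψ ∈ Aut(G), Q = Q(G, ψ), and let P be the orbit of the identity e under Inn(Q). Then P is a normal subgroup of G. -/
section aux
variable {G : Type*} [Group G] (ψ : G ≃* G)

lemma ptSym_apply (y x : G) : ptSym ψ y x = y * ψ (y⁻¹ * x) := rfl

lemma conj_mem_innGroup {f : Equiv.Perm G} (hf : f ∈ innGroup ψ) :
    (ψ.toEquiv : Equiv.Perm G) * f * (ψ.toEquiv : Equiv.Perm G)⁻¹ ∈ innGroup ψ := by
  induction hf using Subgroup.closure_induction with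
  | mem g hg =>
    obtain ⟨y, rfl⟩ := hg
    have : (ψ.toEquiv : Equiv.Perm G) * ptSym ψ y * (ψ.toEquiv : Equiv.Perm G)⁻¹
        = ptSym ψ (ψ y) := by
      ext x
      simp [ptSym, Equiv.Perm.mul_apply, Equiv.Perm.inv_def, map_mul, map_inv, mul_assoc]
    rw [this]
    exact Subgroup.subset_closure ⟨ψ y, rfl⟩
  | one => simpa using one_mem _
  | mul a b _ _ ha hb =>
    have := mul_mem ha hb
    simpa [mul_assoc] using this
  | inv a _ ha =>
    have := inv_mem ha
    simpa [mul_assoc] using this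

lemma conj_symm_mem_innGroup {f : Equiv.Perm G} (hf : f ∈ innGroup ψ) :
    (ψ.toEquiv : Equiv.Perm G)⁻¹ * f * (ψ.toEquiv : Equiv.Perm G) ∈ innGroup ψ := by
  induction hf using Subgroup.closure_induction with
  | mem g hg =>
    obtain ⟨y, rfl⟩ := hg
    have : (ψ.toEquiv : Equiv.Perm G)⁻¹ * ptSym ψ y * (ψ.toEquiv : Equiv.Perm G)
        = ptSym ψ (ψ.symm y) := by
      ext x
      simp [ptSym, Equiv.Perm.mul_apply, Equiv.Perm.inv_def, map_mul, map_inv, mul_assoc]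
    rw [this]
    exact Subgroup.subset_closure ⟨ψ.symm y, rfl⟩
  | one => simpa using one_mem _
  | mul a b _ _ ha hb =>
    have := mul_mem ha hb
    simpa [mul_assoc] using this
  | inv a _ ha =>
    have := inv_mem ha
    simpa [mul_assoc] using this

lemma psi_mem_orbit {a : G} (ha : a ∈ innOrbit ψ) : ψ a ∈ innOrbit ψ := by
  obtain ⟨f, hf, rfl⟩ := ha
  refine ⟨_, conj_mem_innGroup ψ hf, ?_⟩
  simp [Equiv.Perm.mul_apply, Equiv.Perm.inv_def, map_one]

lemma psi_symm_mem_orbit {a : G} (ha : a ∈ innOrbit ψ) : ψ.symm a ∈ innOrbit ψ := by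
  obtain ⟨f, hf, rfl⟩ := ha
  refine ⟨_, conj_symm_mem_innGroup ψ hf, ?_⟩
  simp [Equiv.Perm.mul_apply, Equiv.Perm.inv_def, map_one]

/-- key structural invariant -/
lemma keyProp {f : Equiv.Perm G} (hf : f ∈ innGroup ψ) :
    ∃ φ : G ≃* G, (∀ x, f x = f 1 * φ x) ∧
      (∀ a ∈ innOrbit ψ, φ a ∈ innOrbit ψ) ∧
      (∀ a ∈ innOrbit ψ, φ.symm a ∈ innOrbit ψ) := by
  induction hf using Subgroup.closure_induction with
  | mem g hg =>
    obtain ⟨y, rfl⟩ := hg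
    refine ⟨ψ, fun x => ?_, fun a ha => psi_mem_orbit ψ ha, fun a ha => psi_symm_mem_orbit ψ ha⟩
    simp [ptSym_apply, map_mul, map_inv, mul_assoc]
  | one =>
    exact ⟨MulEquiv.refl G, by simp, fun a ha => ha, fun a ha => ha⟩
  | mul a b _ _ ha hb =>
    obtain ⟨φa, hφa, hsa, hsa'⟩ := ha
    obtain ⟨φb, hφb, hsb, hsb'⟩ := hb
    refine ⟨φb.trans φa, fun x => ?_, fun c hc => hsa _ (hsb _ hc),
      fun c hc => hsb' _ (hsa' _ hc)⟩
    simp only [Equiv.Perm.mul_apply, MulEquiv.trans_apply]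
    rw [hφb x, hφa, map_mul, hφa (b 1), mul_assoc]
  | inv a _ ha =>
    obtain ⟨φ, hφ, hs, hs'⟩ := ha
    have h1 : ∀ x, a⁻¹ x = φ.symm ((a 1)⁻¹ * x) := by
      intro x
      have h2 : a (φ.symm ((a 1)⁻¹ * x)) = x := by
        rw [hφ, MulEquiv.apply_symm_apply, mul_inv_cancel_left]
      calc a⁻¹ x = a⁻¹ (a (φ.symm ((a 1)⁻¹ * x))) := by rw [h2]
        _ = φ.symm ((a 1)⁻¹ * x) := by simp
    refine ⟨φ.symm, fun x => ?_, hs', hs⟩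
    rw [h1, h1, map_mul, mul_one]

lemma orbit_one_mem : (1 : G) ∈ innOrbit ψ := ⟨1, one_mem _, rfl⟩

lemma orbit_mul_mem {a b : G} (ha : a ∈ innOrbit ψ) (hb : b ∈ innOrbit ψ) :
    a * b ∈ innOrbit ψ := by
  obtain ⟨f, hf, rfl⟩ := ha
  obtain ⟨φ, hφ, hs, hs'⟩ := keyProp ψ hf
  obtain ⟨g, hg, hg1⟩ := hs' b hb
  refine ⟨f * g, mul_mem hf hg, ?_⟩
  rw [Equiv.Perm.mul_apply, hg1, hφ, MulEquiv.apply_symm_apply]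

lemma orbit_inv_mem {a : G} (ha : a ∈ innOrbit ψ) : a⁻¹ ∈ innOrbit ψ := by
  obtain ⟨f, hf, rfl⟩ := ha
  obtain ⟨φ, hφ, hs, hs'⟩ := keyProp ψ hf
  have h1 : f⁻¹ 1 = φ.symm ((f 1)⁻¹) := by
    have : f (φ.symm ((f 1)⁻¹)) = 1 := by
      rw [hφ, MulEquiv.apply_symm_apply, mul_inv_cancel]
    calc f⁻¹ 1 = f⁻¹ (f (φ.symm ((f 1)⁻¹))) := by rw [this]
      _ = _ := by simp
  have : φ.symm ((f 1)⁻¹) ∈ innOrbit ψ := ⟨f⁻¹, inv_mem hf, h1⟩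
  have := hs _ this
  rwa [MulEquiv.apply_symm_apply] at this

/-- The subgroup generated by the `d(y) = y·ψ(y)⁻¹`. -/
def dGroup : Subgroup G := Subgroup.closure (Set.range fun y : G => y * ψ y⁻¹)

lemma apply_mul_inv_mem_dGroup {f : Equiv.Perm G} (hf : f ∈ innGroup ψ) :
    ∀ x, f x * x⁻¹ ∈ dGroup ψ := by
  induction hf using Subgroup.closure_induction with
  | mem g hg =>
    obtain ⟨y, rfl⟩ := hg
    intro x
    have : ptSym ψ y x * x⁻¹ = (y * ψ y⁻¹) * (x * ψ x⁻¹)⁻¹ := by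
      rw [ptSym_apply]; simp [map_mul, map_inv]; group
    rw [this]
    exact mul_mem (Subgroup.subset_closure ⟨y, rfl⟩)
      (inv_mem (Subgroup.subset_closure ⟨x, rfl⟩))
  | one => intro x; simpa using one_mem (dGroup ψ)
  | mul a b _ _ ha hb =>
    intro x
    have : (a * b) x * x⁻¹ = (a (b x) * (b x)⁻¹) * (b x * x⁻¹) := by
      rw [Equiv.Perm.mul_apply]; group
    rw [this]
    exact mul_mem (ha _) (hb _)
  | inv a _ ha =>
    intro x
    have : a⁻¹ x * x⁻¹ = (a (a⁻¹ x) * (a⁻¹ x)⁻¹)⁻¹ := by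
      rw [show a (a⁻¹ x) = x from Equiv.apply_symm_apply a x]; group
    rw [this]
    exact inv_mem (ha _)

lemma orbit_subset_dGroup {a : G} (ha : a ∈ innOrbit ψ) : a ∈ dGroup ψ := by
  obtain ⟨f, hf, rfl⟩ := ha
  simpa using apply_mul_inv_mem_dGroup ψ hf 1

lemma dGroup_subset_orbit {a : G} (ha : a ∈ dGroup ψ) : a ∈ innOrbit ψ := by
  induction ha using Subgroup.closure_induction with
  | mem g hg =>
    obtain ⟨y, rfl⟩ := hg
    exact ⟨ptSym ψ y, Subgroup.subset_closure ⟨y, rfl⟩, by rw [ptSym_apply]; simp⟩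
  | one => exact orbit_one_mem ψ
  | mul a b _ _ ha hb => exact orbit_mul_mem ψ ha hb
  | inv a _ ha => exact orbit_inv_mem ψ ha

lemma dGroup_conj_mem {h : G} (hh : h ∈ dGroup ψ) (g : G) : g * h * g⁻¹ ∈ dGroup ψ := by
  induction hh using Subgroup.closure_induction with
  | mem b hb =>
    obtain ⟨y, rfl⟩ := hb
    have : g * (y * ψ y⁻¹) * g⁻¹ = ((g * y) * ψ (g * y)⁻¹) * (g * ψ g⁻¹)⁻¹ := by
      simp [map_mul, map_inv]; group
    rw [this]
    exact mul_mem (Subgroup.subset_closure ⟨g * y, rfl⟩)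
      (inv_mem (Subgroup.subset_closure ⟨g, rfl⟩))
  | one => simpa using one_mem _
  | mul a b _ _ ha hb =>
    have : g * (a * b) * g⁻¹ = (g * a * g⁻¹) * (g * b * g⁻¹) := by group
    rw [this]; exact mul_mem ha hb
  | inv a _ ha =>
    have : g * a⁻¹ * g⁻¹ = (g * a * g⁻¹)⁻¹ := by group
    rw [this]; exact inv_mem ha

end aux

theorem innOrbit_is_normal_subgroup {G : Type*} [Group G] (ψ : G ≃* G) :
    ∃ H : Subgroup G, H.Normal ∧ (H : Set G) = innOrbit ψ := by
  refine ⟨{ carrier := innOrbit ψ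
            one_mem' := orbit_one_mem ψ
            mul_mem' := fun ha hb => orbit_mul_mem ψ ha hb
            inv_mem' := fun ha => orbit_inv_mem ψ ha }, ?_, rfl⟩
  constructor
  intro n hn g
  exact dGroup_subset_orbit ψ (dGroup_conj_mem ψ (orbit_subset_dGroup ψ hn) g)
end

section
/- Let G be a group, ψ ∈ Aut(G), and P the orbit of the identity e under Inn(Q(G,ψ)). Then ψ(P) = P, i.e., P is invariant under ψ. -/
lemma conj_ptSym {G : Type*} [Group G] (ψ : G ≃* G) (y : G) :
    (ψ.toEquiv : Equiv.Perm G) * ptSym ψ y * (ψ.toEquiv : Equiv.Perm G)⁻¹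
      = ptSym ψ (ψ y) := by
  ext x
  simp [ptSym, Equiv.Perm.mul_apply, Equiv.Perm.inv_def, mul_assoc, map_mul]

lemma conj_inv_ptSym {G : Type*} [Group G] (ψ : G ≃* G) (y : G) :
    (ψ.toEquiv : Equiv.Perm G)⁻¹ * ptSym ψ y * (ψ.toEquiv : Equiv.Perm G)
      = ptSym ψ (ψ.symm y) := by
  have := conj_ptSym ψ (ψ.symm y)
  rw [ψ.apply_symm_apply] at this
  rw [← this]
  group

lemma conj_mem_innGroup_s8 {G : Type*} [Group G] (ψ : G ≃* G) (π : Equiv.Perm G)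
    (hπ : ∀ y : G, π * ptSym ψ y * π⁻¹ ∈ Set.range (ptSym ψ))
    {f : Equiv.Perm G} (hf : f ∈ innGroup ψ) :
    π * f * π⁻¹ ∈ innGroup ψ := by
  have hmem : (MulAut.conj π).toMonoidHom f ∈
      Subgroup.map (MulAut.conj π).toMonoidHom (innGroup ψ) :=
    Subgroup.mem_map_of_mem _ hf
  rw [innGroup, MonoidHom.map_closure] at hmem
  refine Subgroup.closure_mono ?_ (by simpa [MulAut.conj_apply] using hmem)
  rintro g ⟨_, ⟨y, rfl⟩, rfl⟩
  exact hπ y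

theorem innOrbit_psi_invariant {G : Type*} [Group G] (ψ : G ≃* G) :
    ψ '' innOrbit ψ = innOrbit ψ := by
  set π : Equiv.Perm G := (ψ.toEquiv : Equiv.Perm G) with hπdef
  have h1 : π (1 : G) = 1 := by simp [hπdef]
  have h1' : π⁻¹ (1 : G) = 1 := by
    simp [hπdef, Equiv.Perm.inv_def]
  apply Set.eq_of_subset_of_subset
  · rintro _ ⟨g, ⟨f, hf, rfl⟩, rfl⟩
    refine ⟨π * f * π⁻¹,
      conj_mem_innGroup_s8 ψ π (fun y => ⟨ψ y, (conj_ptSym ψ y).symm⟩) hf, ?_⟩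
    simp [Equiv.Perm.mul_apply, Equiv.Perm.inv_def, hπdef]
  · rintro g ⟨f, hf, rfl⟩
    refine ⟨(π⁻¹ * f * π) 1,
      ⟨π⁻¹ * f * π, ?_, rfl⟩, ?_⟩
    · have := conj_mem_innGroup_s8 ψ π⁻¹
        (fun y => ⟨ψ.symm y, by simpa [hπdef] using (conj_inv_ptSym ψ y).symm⟩) hf
      simpa using this
    · simp [Equiv.Perm.mul_apply, Equiv.Perm.inv_def, hπdef]
end

section
/- Let G, G' be groups with identities e, e', ψ ∈ Aut(G), ψ' ∈ Aut(G'), and let P, P' be the orbits of e, e' under the respective inner automorphism groups. Suppose there is a group isomorphism h : P → P' with h ∘ ψ|_P = ψ'|_{P'} ∘ h, and representatives A ⊆ G, A' ⊆ G' of the coset spaces G/P, G'/P' together with a bijection k : A → A' such that h(e * a) = e' *' k(a) for all a ∈ A. Then the map f : G → G' defined by f(x) = h(a_x p_x a_x⁻¹)·k(a_x), where x = a_x p_x is the unique decomposition with a_x ∈ A, p_x ∈ P, is a quandle isomorphism from Q(G,ψ) to Q(G',ψ'). -/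
/-- `A` is a set of representatives of the left cosets of the subset `P` of `G`:
every `x ∈ G` decomposes uniquely as `x = a * p` with `a ∈ A`, `p ∈ P`. -/
def IsCosetRep {G : Type*} [Group G] (A P : Set G) : Prop :=
  ∀ x : G, ∃! a : G, a ∈ A ∧ ∃ p ∈ P, x = a * p

namespace MainAux

variable {G : Type*} [Group G]

/-- The normal closure of the set `{y ψ(y)⁻¹}`. -/
def NN (ψ : G ≃* G) : Subgroup G :=
  Subgroup.normalClosure (Set.range (fun y => y * (ψ y)⁻¹))

lemma NN_normal (ψ : G ≃* G) : (NN ψ).Normal := Subgroup.normalClosure_normal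

lemma self_psi_mem (ψ : G ≃* G) (x : G) : x * (ψ x)⁻¹ ∈ NN ψ :=
  Subgroup.subset_normalClosure ⟨x, rfl⟩

lemma psi_mem (ψ : G ≃* G) {x : G} (hx : x ∈ NN ψ) : ψ x ∈ NN ψ := by
  haveI := NN_normal ψ
  haveI : ((NN ψ).comap ψ.toMonoidHom).Normal := (NN_normal ψ).comap ψ.toMonoidHom
  have hle : NN ψ ≤ (NN ψ).comap ψ.toMonoidHom := by
    apply Subgroup.normalClosure_le_normal
    rintro _ ⟨y, rfl⟩
    show ψ (y * (ψ y)⁻¹) ∈ NN ψ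
    rw [map_mul, map_inv]
    exact self_psi_mem ψ (ψ y)
  exact hle hx

lemma psi_symm_mem (ψ : G ≃* G) {x : G} (hx : x ∈ NN ψ) : ψ.symm x ∈ NN ψ := by
  haveI := NN_normal ψ
  haveI : ((NN ψ).comap ψ.symm.toMonoidHom).Normal := (NN_normal ψ).comap ψ.symm.toMonoidHom
  have hle : NN ψ ≤ (NN ψ).comap ψ.symm.toMonoidHom := by
    apply Subgroup.normalClosure_le_normal
    rintro _ ⟨y, rfl⟩
    show ψ.symm (y * (ψ y)⁻¹) ∈ NN ψ
    rw [map_mul, map_inv, ψ.symm_apply_apply]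
    have := self_psi_mem ψ (ψ.symm y)
    rwa [ψ.apply_symm_apply] at this
  exact hle hx

lemma zpow_mem (ψ : G ≃* G) (n : ℤ) : ∀ x ∈ NN ψ, (ψ ^ n : MulAut G) x ∈ NN ψ := by
  induction n using Int.induction_on with
  | zero => intro x hx; simpa using hx
  | succ n ih =>
    intro x hx
    have e : (ψ ^ ((n : ℤ) + 1) : MulAut G) x = (ψ ^ (n : ℤ) : MulAut G) (ψ x) := by
      rw [zpow_add_one]; rfl
    rw [e]; exact ih _ (psi_mem ψ hx)
  | pred n ih =>
    intro x hx
    have e : (ψ ^ (-(n : ℤ) - 1) : MulAut G) x = (ψ ^ (-(n : ℤ)) : MulAut G) (ψ.symm x) := by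
      rw [zpow_sub_one]; rfl
    rw [e]; exact ih _ (psi_symm_mem ψ hx)

lemma zpow_cancel (ψ : G ≃* G) (n : ℤ) (z : G) :
    (ψ ^ n : MulAut G) ((ψ ^ (-n) : MulAut G) z) = z := by
  have h : (ψ ^ n : MulAut G) * (ψ ^ (-n) : MulAut G) = 1 := by
    rw [← zpow_add]; simp
  have := congrArg (fun φ : MulAut G => φ z) h
  simpa using this

/-- Every element of `innGroup ψ` has the form `x ↦ c · ψⁿ(x)` with `c ∈ NN ψ`. -/
lemma innGroup_form (ψ : G ≃* G) (f : Equiv.Perm G) (hf : f ∈ innGroup ψ) :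
    ∃ (c : G) (n : ℤ), c ∈ NN ψ ∧ ∀ x, f x = c * (ψ ^ n : MulAut G) x := by
  refine Subgroup.closure_induction ?_ ?_ ?_ ?_ hf
  · rintro _ ⟨y, rfl⟩
    refine ⟨y * (ψ y)⁻¹, 1, self_psi_mem ψ y, fun x => ?_⟩
    show y * ψ (y⁻¹ * x) = y * (ψ y)⁻¹ * (ψ ^ (1 : ℤ) : MulAut G) x
    rw [zpow_one]
    show y * ψ (y⁻¹ * x) = y * (ψ y)⁻¹ * ψ x
    rw [map_mul, map_inv, mul_assoc]
  · exact ⟨1, 0, one_mem _, fun x => by simp⟩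
  · rintro f g - - ⟨c, n, hc, hfx⟩ ⟨d, m, hd, hgx⟩
    refine ⟨c * (ψ ^ n : MulAut G) d, n + m, mul_mem hc (zpow_mem ψ n d hd), fun x => ?_⟩
    have e : (ψ ^ n : MulAut G) ((ψ ^ m : MulAut G) x) = (ψ ^ (n + m) : MulAut G) x := by
      rw [zpow_add]; rfl
    have hfg : (f * g) x = f (g x) := rfl
    rw [hfg, hgx, hfx, map_mul, e, ← mul_assoc]
  · rintro f - ⟨c, n, hc, hfx⟩
    refine ⟨(ψ ^ (-n) : MulAut G) c⁻¹, -n, zpow_mem ψ (-n) _ (inv_mem hc), fun x => ?_⟩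
    have : f ((ψ ^ (-n) : MulAut G) c⁻¹ * (ψ ^ (-n) : MulAut G) x) = x := by
      rw [hfx, map_mul, zpow_cancel, zpow_cancel]
      group
    calc f⁻¹ x = f⁻¹ (f ((ψ ^ (-n) : MulAut G) c⁻¹ * (ψ ^ (-n) : MulAut G) x)) := by rw [this]
    _ = (ψ ^ (-n) : MulAut G) c⁻¹ * (ψ ^ (-n) : MulAut G) x := Equiv.symm_apply_apply f _

lemma toPerm_mem (ψ : G ≃* G) : MulAut.toPerm G ψ ∈ innGroup ψ := by
  have e : ptSym ψ 1 = MulAut.toPerm G ψ := by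
    ext x; simp [ptSym, MulAut.toPerm]; rfl
  rw [← e]
  exact Subgroup.subset_closure ⟨1, rfl⟩

lemma toPerm_zpow_apply (ψ : G ≃* G) (n : ℤ) (x : G) :
    ((MulAut.toPerm G ψ) ^ n) x = (ψ ^ n : MulAut G) x := by
  rw [← map_zpow]; rfl

lemma s_mem_orbit (ψ : G ≃* G) (y : G) : y * (ψ y)⁻¹ ∈ innOrbit ψ := by
  refine ⟨ptSym ψ y, Subgroup.subset_closure ⟨y, rfl⟩, ?_⟩
  show y * ψ (y⁻¹ * 1) = y * (ψ y)⁻¹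
  rw [mul_one, map_inv]

lemma one_mem_orbit (ψ : G ≃* G) : (1 : G) ∈ innOrbit ψ := ⟨1, one_mem _, rfl⟩

lemma mul_mem_orbit (ψ : G ≃* G) {c d : G} (hc : c ∈ innOrbit ψ) (hd : d ∈ innOrbit ψ) :
    c * d ∈ innOrbit ψ := by
  obtain ⟨f, hf, rfl⟩ := hc
  obtain ⟨g, hg, rfl⟩ := hd
  obtain ⟨c₀, n, -, hfx⟩ := innGroup_form ψ f hf
  have hE : (MulAut.toPerm G ψ) ^ (-n) ∈ innGroup ψ :=
    Subgroup.zpow_mem _ (toPerm_mem ψ) (-n)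
  refine ⟨f * ((MulAut.toPerm G ψ) ^ (-n) * g), mul_mem hf (mul_mem hE hg), ?_⟩
  show f (((MulAut.toPerm G ψ) ^ (-n)) (g 1)) = f 1 * g 1
  rw [toPerm_zpow_apply, hfx, hfx, zpow_cancel]
  simp

lemma inv_mem_orbit (ψ : G ≃* G) {c : G} (hc : c ∈ innOrbit ψ) : c⁻¹ ∈ innOrbit ψ := by
  obtain ⟨f, hf, rfl⟩ := hc
  obtain ⟨c₀, n, -, hfx⟩ := innGroup_form ψ f hf
  have hE : (MulAut.toPerm G ψ) ^ n ∈ innGroup ψ :=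
    Subgroup.zpow_mem _ (toPerm_mem ψ) n
  refine ⟨(MulAut.toPerm G ψ) ^ n * f⁻¹, mul_mem hE (inv_mem hf), ?_⟩
  have h1 : f ((ψ ^ (-n) : MulAut G) ((f 1)⁻¹)) = 1 := by
    rw [hfx, zpow_cancel, hfx]
    simp
  have h2 : f⁻¹ 1 = (ψ ^ (-n) : MulAut G) ((f 1)⁻¹) := by
    calc f⁻¹ 1 = f⁻¹ (f ((ψ ^ (-n) : MulAut G) ((f 1)⁻¹))) := by rw [h1]
    _ = _ := Equiv.symm_apply_apply f _
  show ((MulAut.toPerm G ψ) ^ n) (f⁻¹ 1) = (f 1)⁻¹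
  rw [h2, toPerm_zpow_apply, zpow_cancel]

lemma orbit_eq (ψ : G ≃* G) : innOrbit ψ = (NN ψ : Set G) := by
  ext g
  constructor
  · rintro ⟨f, hf, rfl⟩
    obtain ⟨c, n, hc, hfx⟩ := innGroup_form ψ f hf
    rw [hfx 1, map_one, mul_one]
    exact hc
  · intro hg
    have hg' : g ∈ Subgroup.closure (Group.conjugatesOfSet
        (Set.range (fun y => y * (ψ y)⁻¹))) := hg
    refine Subgroup.closure_induction ?_ (one_mem_orbit ψ)
      (fun x y _ _ hx hy => mul_mem_orbit ψ hx hy)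
      (fun x _ hx => inv_mem_orbit ψ hx) hg'
    intro x hx
    rw [Group.mem_conjugatesOfSet_iff] at hx
    obtain ⟨a, ⟨y, rfl⟩, hconj⟩ := hx
    obtain ⟨c, hc⟩ := isConj_iff.mp hconj
    have key : c * (y * (ψ y)⁻¹) * c⁻¹ =
        ((c * y) * (ψ (c * y))⁻¹) * ((c * (ψ c)⁻¹))⁻¹ := by
      rw [map_mul, mul_inv_rev]
      group
    rw [← hc, key]
    exact mul_mem_orbit ψ (s_mem_orbit ψ (c * y)) (inv_mem_orbit ψ (s_mem_orbit ψ c))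

-- convenience membership lemmas for the orbit
lemma orbit_one (ψ : G ≃* G) : (1 : G) ∈ innOrbit ψ := one_mem_orbit ψ

lemma orbit_mul (ψ : G ≃* G) {p q : G} (hp : p ∈ innOrbit ψ) (hq : q ∈ innOrbit ψ) :
    p * q ∈ innOrbit ψ := mul_mem_orbit ψ hp hq

lemma orbit_inv (ψ : G ≃* G) {p : G} (hp : p ∈ innOrbit ψ) : p⁻¹ ∈ innOrbit ψ :=
  inv_mem_orbit ψ hp

lemma orbit_conj (ψ : G ≃* G) {p : G} (hp : p ∈ innOrbit ψ) (g : G) :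
    g * p * g⁻¹ ∈ innOrbit ψ := by
  rw [orbit_eq] at hp ⊢
  exact (NN_normal ψ).conj_mem p hp g

lemma orbit_psi (ψ : G ≃* G) {p : G} (hp : p ∈ innOrbit ψ) : ψ p ∈ innOrbit ψ := by
  rw [orbit_eq] at hp ⊢
  exact psi_mem ψ hp

lemma orbit_self_psi (ψ : G ≃* G) (x : G) : x * (ψ x)⁻¹ ∈ innOrbit ψ := s_mem_orbit ψ x

end MainAux

open MainAux

theorem main_construction {G G' : Type*} [Group G] [Group G']
    (ψ : G ≃* G) (ψ' : G' ≃* G')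
    (h : G → G') (k : G → G') (A : Set G) (A' : Set G')
    (hA : IsCosetRep A (innOrbit ψ)) (hA' : IsCosetRep A' (innOrbit ψ'))
    (hbij : Set.BijOn h (innOrbit ψ) (innOrbit ψ'))
    (hmul : ∀ p ∈ innOrbit ψ, ∀ q ∈ innOrbit ψ, h (p * q) = h p * h q)
    (hcomm : ∀ p ∈ innOrbit ψ, h (ψ p) = ψ' (h p))
    (hk : Set.BijOn k A A')
    (hB : ∀ a ∈ A, h (gaOp ψ 1 a) = gaOp ψ' 1 (k a))
    (f : G → G')
    (hf : ∀ a ∈ A, ∀ p ∈ innOrbit ψ, f (a * p) = h (a * p * a⁻¹) * k a) :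
    Function.Bijective f ∧ ∀ x y : G, f (gaOp ψ x y) = gaOp ψ' (f x) (f y) := by
  classical
  have P1 := orbit_one ψ
  -- h sends 1 to 1
  have h1 : h 1 = 1 := by
    have e := hmul 1 P1 1 P1
    rw [mul_one] at e
    have e' : h 1 * 1 = h 1 * h 1 := by rw [mul_one]; exact e
    exact (mul_left_cancel e').symm
  -- h preserves inverses
  have hinv : ∀ p ∈ innOrbit ψ, h p⁻¹ = (h p)⁻¹ := by
    intro p hp
    have e : h p * h p⁻¹ = 1 := by
      rw [← hmul p hp p⁻¹ (orbit_inv ψ hp), mul_inv_cancel, h1]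
    exact eq_inv_of_mul_eq_one_right e
  -- reformulation of hB
  have hBval : ∀ a ∈ A, h (a * (ψ a)⁻¹) = k a * (ψ' (k a))⁻¹ := by
    intro a ha
    have e := hB a ha
    simpa [gaOp] using e
  have hmapsP : ∀ p ∈ innOrbit ψ, h p ∈ innOrbit ψ' := fun p hp => hbij.mapsTo hp
  -- value of f
  have hfval : ∀ x a p, a ∈ A → p ∈ innOrbit ψ → x = a * p → f x = h (x * a⁻¹) * k a := by
    intro x a p ha hp hx
    subst hx
    rw [hf a ha p hp]
  -- lemma L
  have hL : ∀ x : G, f x * (ψ' (f x))⁻¹ = h (x * (ψ x)⁻¹) := by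
    intro x
    obtain ⟨a, ⟨ha, p, hp, hx⟩, -⟩ := hA x
    have hxa : x * a⁻¹ ∈ innOrbit ψ := by
      rw [hx]; exact orbit_conj ψ hp a
    have hfx : f x = h (x * a⁻¹) * k a := hfval x a p ha hp hx
    have m2 := orbit_self_psi ψ a
    have m3 : (ψ (x * a⁻¹))⁻¹ ∈ innOrbit ψ := orbit_inv ψ (orbit_psi ψ hxa)
    have e2 : (x * a⁻¹) * ((a * (ψ a)⁻¹) * (ψ (x * a⁻¹))⁻¹) = x * (ψ x)⁻¹ := by
      simp only [map_mul, map_inv, mul_inv_rev, inv_inv]; group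
    have e1 : h ((x * a⁻¹) * ((a * (ψ a)⁻¹) * (ψ (x * a⁻¹))⁻¹)) =
        h (x * a⁻¹) * (h (a * (ψ a)⁻¹) * h ((ψ (x * a⁻¹))⁻¹)) := by
      rw [hmul _ hxa _ (orbit_mul ψ m2 m3), hmul _ m2 _ m3]
    rw [hfx, ← e2, e1, hBval a ha, hinv _ (orbit_psi ψ hxa), hcomm _ hxa]
    simp only [map_mul, mul_inv_rev]
    group
  -- lemma M
  have hM : ∀ x p, p ∈ innOrbit ψ → f (x * p) = h (x * p * x⁻¹) * f x := by
    intro x p hp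
    obtain ⟨a, ⟨ha, q, hq, hx⟩, -⟩ := hA x
    subst hx
    have hxp : a * q * p = a * (q * p) := by group
    have m1 : a * q * p * (a * q)⁻¹ ∈ innOrbit ψ := orbit_conj ψ hp (a * q)
    have m2 : a * q * a⁻¹ ∈ innOrbit ψ := orbit_conj ψ hq a
    conv_lhs => rw [hxp]
    rw [hf a ha (q * p) (orbit_mul ψ hq hp), hfval (a * q) a q ha hq rfl]
    have e5 : h (a * (q * p) * a⁻¹) = h (a * q * p * (a * q)⁻¹) * h (a * q * a⁻¹) := by
      rw [← hmul _ m1 _ m2]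
      congr 1
      group
    rw [e5, mul_assoc]
  constructor
  · constructor
    · -- injective
      intro x₁ x₂ hfeq
      obtain ⟨a, ⟨ha, p, hp, hx1⟩, -⟩ := hA x₁
      obtain ⟨b, ⟨hb, q, hq, hx2⟩, -⟩ := hA x₂
      have m1 : x₁ * a⁻¹ ∈ innOrbit ψ := by rw [hx1]; exact orbit_conj ψ hp a
      have m2 : x₂ * b⁻¹ ∈ innOrbit ψ := by rw [hx2]; exact orbit_conj ψ hq b
      have hfa : f x₁ = h (x₁ * a⁻¹) * k a := hfval x₁ a p ha hp hx1
      have hfb : f x₂ = h (x₂ * b⁻¹) * k b := hfval x₂ b q hb hq hx2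
      have d1 : k a ∈ A' ∧ ∃ p' ∈ innOrbit ψ', f x₁ = k a * p' := by
        refine ⟨hk.mapsTo ha, (k a)⁻¹ * h (x₁ * a⁻¹) * k a, ?_, ?_⟩
        · have := orbit_conj ψ' (hmapsP _ m1) (k a)⁻¹
          simpa using this
        · rw [hfa]; group
      have d2 : k b ∈ A' ∧ ∃ p' ∈ innOrbit ψ', f x₁ = k b * p' := by
        refine ⟨hk.mapsTo hb, (k b)⁻¹ * h (x₂ * b⁻¹) * k b, ?_, ?_⟩
        · have := orbit_conj ψ' (hmapsP _ m2) (k b)⁻¹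
          simpa using this
        · rw [hfeq, hfb]; group
      obtain ⟨a₀, -, huniq⟩ := hA' (f x₁)
      have hab : a = b := hk.injOn ha hb ((huniq (k a) d1).trans (huniq (k b) d2).symm)
      subst hab
      have e3 : h (x₁ * a⁻¹) = h (x₂ * a⁻¹) := by
        have e := hfa.symm.trans (hfeq.trans hfb)
        exact mul_right_cancel e
      have e4 : x₁ * a⁻¹ = x₂ * a⁻¹ := hbij.injOn m1 m2 e3
      exact mul_right_cancel e4
    · -- surjective
      intro x'
      obtain ⟨a', ⟨ha', p', hp', hx'⟩, -⟩ := hA' x'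
      obtain ⟨a, ha, hka⟩ := hk.surjOn ha'
      have m : a' * p' * a'⁻¹ ∈ innOrbit ψ' := orbit_conj ψ' hp' a'
      obtain ⟨q, hq, hhq⟩ := hbij.surjOn m
      have hq' : a⁻¹ * q * a ∈ innOrbit ψ := by
        have := orbit_conj ψ hq a⁻¹
        simpa using this
      refine ⟨a * (a⁻¹ * q * a), ?_⟩
      rw [hf a ha _ hq']
      have e : a * (a⁻¹ * q * a) * a⁻¹ = q := by group
      rw [e, hhq, hka, hx']
      group
  · -- quandle homomorphism
    intro x y
    have hp0 : (x⁻¹ * y) * (ψ (x⁻¹ * y))⁻¹ ∈ innOrbit ψ := orbit_self_psi ψ (x⁻¹ * y)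
    have key : gaOp ψ x y = x * ((x⁻¹ * y) * (ψ (x⁻¹ * y))⁻¹) := by
      simp only [gaOp, map_mul, map_inv]; group
    have eR : gaOp ψ' (f x) (f y) =
        (f y * (ψ' (f y))⁻¹) * ((f x * (ψ' (f x))⁻¹)⁻¹ * f x) := by
      simp only [gaOp, map_mul, map_inv, mul_inv_rev, inv_inv]; group
    rw [key, hM x _ hp0, eR, hL x, hL y,
      ← hinv _ (orbit_self_psi ψ x)]
    rw [← mul_assoc (h (y * (ψ y)⁻¹)) _ (f x)]
    congr 1
    rw [← hmul _ (orbit_self_psi ψ y) _ (orbit_inv ψ (orbit_self_psi ψ x))]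
    congr 1
    simp only [map_mul, map_inv, mul_inv_rev, inv_inv]
    group
end

section
/- Let Q₈ = {±1, ±i, ±j, ±k} be the quaternion group, ψ the automorphism of Q₈ cyclically permuting i, j, k, and σ : ℤ/2ℤ → Aut(Q₈) given by conjugation by i^n. Define ψ₁' on the semidirect product G' = Q₈ ⋊_σ ℤ/2ℤ by ψ₁'(a, n) = (ψ(a·i^n)·i^{-n}, n). Then ψ₁' is a group automorphism of G' of order 3. -/
theorem psi1'_is_automorphism_of_order_three
    (Q8 : Type*) [Group Q8] [Fintype Q8] (hcard : Fintype.card Q8 = 8)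
    (i j k : Q8)
    (hijk : i * j * k = i ^ 2) (hij : i ^ 2 = j ^ 2) (hjk : j ^ 2 = k ^ 2)
    (h4 : (i ^ 2) ^ 2 = 1) (hne : i ^ 2 ≠ 1)
    (hgen : Subgroup.closure {i, j, k} = (⊤ : Subgroup Q8))
    (ψ : Q8 ≃* Q8) (hψi : ψ i = j) (hψj : ψ j = k) (hψk : ψ k = i)
    (σ : Multiplicative (ZMod 2) →* MulAut Q8)
    (hσ : ∀ (n : Multiplicative (ZMod 2)) (a : Q8),
      σ n a = i ^ (Multiplicative.toAdd n).val * a * (i ^ (Multiplicative.toAdd n).val)⁻¹) :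
    ∃ Ψ : MulAut (Q8 ⋊[σ] Multiplicative (ZMod 2)),
      (∀ x : Q8 ⋊[σ] Multiplicative (ZMod 2),
          Ψ x = ⟨ψ (x.left * i ^ (Multiplicative.toAdd x.right).val) *
              (i ^ (Multiplicative.toAdd x.right).val)⁻¹, x.right⟩) ∧
      orderOf Ψ = 3 := by
  -- ψ^3 = id
  have hψ3 : ∀ a : Q8, ψ (ψ (ψ a)) = a := by
    intro a
    have ha : a ∈ Subgroup.closure ({i, j, k} : Set Q8) := hgen ▸ Subgroup.mem_top a
    induction ha using Subgroup.closure_induction with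
    | mem x hx =>
      rcases hx with h | h | h <;> subst h <;> simp [hψi, hψj, hψk]
    | one => simp
    | mul x y _ _ hx hy => simp [map_mul, hx, hy]
    | inv x _ hx => simp [map_inv, hx]
  -- i ≠ j
  have hij_ne : i ≠ j := by
    intro h
    apply hne
    have hk1 : k = 1 := by
      have h2 : i * j * k = i * j * 1 := by rw [hijk, h, sq, mul_one]
      exact mul_left_cancel h2
    rw [hij, hjk, hk1, one_pow]
  have hz2 : ∀ z : ZMod 2, z = 0 ∨ z = 1 := by decide
  set F : (Q8 ⋊[σ] Multiplicative (ZMod 2)) → (Q8 ⋊[σ] Multiplicative (ZMod 2)) :=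
    fun x => ⟨ψ (x.left * i ^ (Multiplicative.toAdd x.right).val) *
              (i ^ (Multiplicative.toAdd x.right).val)⁻¹, x.right⟩ with hF
  have hFFF : ∀ x, F (F (F x)) = x := by
    rintro ⟨a, n⟩
    simp only [hF]
    ext
    · simp only [SemidirectProduct.mk_eq_inl_mul_inr]
      simp only [map_mul, map_inv]
      group
      simp [hψ3]
    · rfl
  have hmul : ∀ x y, F (x * y) = F x * F y := by
    rintro ⟨a, m⟩ ⟨b, n⟩
    ext
    · simp only [hF, SemidirectProduct.mul_left, SemidirectProduct.mul_right, hσ, toAdd_mul]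
      rcases hz2 (Multiplicative.toAdd m) with hm | hm <;>
        rcases hz2 (Multiplicative.toAdd n) with hn | hn <;>
          rw [hm, hn] <;>
            simp only [show ((0+0 : ZMod 2)).val = 0 by decide,
              show ((0+1 : ZMod 2)).val = 1 by decide,
              show ((1+0 : ZMod 2)).val = 1 by decide,
              show ((1+1 : ZMod 2)).val = 0 by decide,
              show ((0 : ZMod 2)).val = 0 by decide,
              show ((1 : ZMod 2)).val = 1 by decide,
              pow_zero, pow_one, mul_one, one_mul, inv_one, map_mul, map_inv] <;>
            (try group)
      rw [hψi]
      have hkey : (j:Q8) ^ (-1 : ℤ) = j * i ^ (-2 : ℤ) := by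
        have h2 : (i:Q8) ^ (-2 : ℤ) = (i ^ 2)⁻¹ := by group
        rw [h2, hij]; group
      rw [hkey]; group
    · rfl
  refine ⟨{ toFun := F, invFun := F ∘ F, left_inv := ?_, right_inv := ?_,
            map_mul' := hmul }, fun x => rfl, ?_⟩
  · intro x; exact hFFF x
  · intro x; exact hFFF x
  set Ψ : MulAut (Q8 ⋊[σ] Multiplicative (ZMod 2)) :=
    { toFun := F, invFun := F ∘ F, left_inv := hFFF, right_inv := hFFF,
      map_mul' := hmul }
  have h3 : Ψ ^ 3 = 1 := by
    apply MulEquiv.ext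
    intro x
    have hx : (Ψ ^ 3) x = F (F (F x)) := by
      rw [pow_succ, pow_succ, pow_one]
      rfl
    rw [hx, hFFF]
    rfl
  have hne1 : Ψ ≠ 1 := by
    intro h
    have hx := congrArg (fun f : MulAut (Q8 ⋊[σ] Multiplicative (ZMod 2)) =>
      (f ⟨i, 1⟩).left) h
    simp only [MulAut.one_apply] at hx
    have hx' : ψ (i * i ^ (Multiplicative.toAdd (1 : Multiplicative (ZMod 2))).val) *
        (i ^ (Multiplicative.toAdd (1 : Multiplicative (ZMod 2))).val)⁻¹ = i := hx
    rw [show (Multiplicative.toAdd (1 : Multiplicative (ZMod 2))).val = 0 by decide] at hx'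
    simp only [pow_zero, mul_one, inv_one] at hx'
    rw [hψi] at hx'
    exact hij_ne hx'.symm
  have hdvd : orderOf Ψ ∣ 3 := orderOf_dvd_of_pow_eq_one h3
  rcases Nat.prime_three.eq_one_or_self_of_dvd _ hdvd with h | h
  · exact absurd (orderOf_eq_one_iff.mp h) hne1
  · exact h
end

section
/- Let Q₈ be the quaternion group, G = Q₈ × ℤ/2ℤ, and G' = Q₈ ⋊_σ ℤ/2ℤ where σ_n is conjugation by i^n. Let ψ₁(a,n) = (ψ(a), n) on G and ψ₁'(a,n) = (ψ(a·i^n)·i^{-n}, n) on G', where ψ cyclically permutes i, j, k. Then the generalized Alexander quandles Q(G, ψ₁) and Q(G', ψ₁') are isomorphic as quandles. -/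
theorem Q1_iso_Q1'
    (Q8 : Type*) [Group Q8] [Fintype Q8] (hcard : Fintype.card Q8 = 8)
    (i j k : Q8)
    (hijk : i * j * k = i ^ 2) (hij : i ^ 2 = j ^ 2) (hjk : j ^ 2 = k ^ 2)
    (h4 : (i ^ 2) ^ 2 = 1) (hne : i ^ 2 ≠ 1)
    (hgen : Subgroup.closure {i, j, k} = (⊤ : Subgroup Q8))
    (ψ : Q8 ≃* Q8) (hψi : ψ i = j) (hψj : ψ j = k) (hψk : ψ k = i)
    (σ : Multiplicative (ZMod 2) →* MulAut Q8)
    (hσ : ∀ (n : Multiplicative (ZMod 2)) (a : Q8),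
      σ n a = i ^ (Multiplicative.toAdd n).val * a * (i ^ (Multiplicative.toAdd n).val)⁻¹)
    (Ψ' : MulAut (Q8 ⋊[σ] Multiplicative (ZMod 2)))
    (hΨ' : ∀ x : Q8 ⋊[σ] Multiplicative (ZMod 2),
        Ψ' x = ⟨ψ (x.left * i ^ (Multiplicative.toAdd x.right).val) *
            (i ^ (Multiplicative.toAdd x.right).val)⁻¹, x.right⟩) :
    ∃ f : Q8 × Multiplicative (ZMod 2) → Q8 ⋊[σ] Multiplicative (ZMod 2),
      Function.Bijective f ∧
        ∀ x y, f (gaOp (ψ.prodCongr (MulEquiv.refl (Multiplicative (ZMod 2)))) x y)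
            = gaOp (Ψ' : (Q8 ⋊[σ] Multiplicative (ZMod 2)) ≃* _) (f x) (f y) := by
  -- i^2 is central
  have hcomm : ∀ x : Q8, Commute x (i ^ 2) := by
    intro x
    have hx : x ∈ Subgroup.closure {i, j, k} := hgen ▸ Subgroup.mem_top x
    induction hx using Subgroup.closure_induction with
    | mem y hy =>
      rcases hy with rfl | rfl | rfl
      · exact (Commute.refl y).pow_right 2
      · rw [hij]; exact (Commute.refl y).pow_right 2
      · rw [hij, hjk]; exact (Commute.refl y).pow_right 2
    | one => exact Commute.one_left _
    | mul a b _ _ ha hb => exact ha.mul_left hb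
    | inv a _ ha => exact ha.inv_left
  have hψc : ψ (i ^ 2) = i ^ 2 := by rw [map_pow, hψi, ← hij]
  have hψcc : ψ (i * i) = i * i := by rw [← pow_two]; rw [hψc, pow_two]
  have hcc : ∀ x : Q8, i * i * x = x * (i * i) := fun x => by
    have := (hcomm x).eq; rw [pow_two] at this; rw [← this]
  refine ⟨fun p => ⟨p.1 * i ^ (Multiplicative.toAdd p.2).val, p.2⟩, ?_, ?_⟩
  · constructor
    · rintro ⟨a, m⟩ ⟨b, n⟩ h
      simp only [SemidirectProduct.ext_iff] at h
      obtain ⟨h1, h2⟩ := h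
      subst h2
      simp only [mul_left_inj] at h1
      exact Prod.ext h1 rfl
    · rintro ⟨a, n⟩
      exact ⟨(a * (i ^ (Multiplicative.toAdd n).val)⁻¹, n), by simp⟩
  · rintro ⟨a, m⟩ ⟨b, n⟩
    simp only [gaOp, hΨ', hσ, Prod.mk_mul_mk, SemidirectProduct.ext_iff,
      SemidirectProduct.mul_left, SemidirectProduct.mul_right,
      SemidirectProduct.inv_left, SemidirectProduct.inv_right,
      Prod.map, Prod.fst_mul, Prod.snd_mul,
      Prod.fst_inv, Prod.snd_inv, MulEquiv.refl_apply, MulEquiv.prodCongr,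
      Equiv.prodCongr_apply, MulEquiv.coe_mk, Equiv.coe_fn_mk, MulEquiv.toEquiv_eq_coe, EquivLike.coe_coe,
      mul_inv_cancel_left, inv_mul_cancel_left]
    have h2 : ∀ z : ZMod 2, z = 0 ∨ z = 1 := by decide
    have hminv : ∀ z : Multiplicative (ZMod 2), z⁻¹ = z := by decide
    have hval2 : (2 : ZMod 2).val = 0 := by decide
    rcases h2 (Multiplicative.toAdd n) with hn | hn <;>
      rcases h2 (Multiplicative.toAdd m) with hm | hm <;>
        constructor <;>
    simp only [hminv, toAdd_mul, hn, hm, add_zero, zero_add, one_add_one_eq_two,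
      ZMod.val_zero, ZMod.val_one, hval2, pow_zero, pow_one, one_mul, mul_one,
      inv_one]
    · rw [show b⁻¹ * (a * i) * i = b⁻¹ * a * (i * i) by
          simp [mul_assoc], map_mul ψ (b⁻¹ * a) (i * i), hψcc]
      simp [mul_assoc]
    · rw [show i * (b * i)⁻¹ * i⁻¹ * (i * a * i⁻¹) * i = b⁻¹ * a by
          simp [mul_assoc], show b * i * (i * (ψ (b⁻¹ * a) * i⁻¹) * i⁻¹)
            = b * (i * i * ψ (b⁻¹ * a)) * (i * i)⁻¹ by simp [mul_assoc], hcc]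
      simp [mul_assoc]
    · rw [show i * (b * i)⁻¹ * i⁻¹ * (i * (a * i) * i⁻¹) = b⁻¹ * a by
          simp [mul_assoc], show b * i * (i * ψ (b⁻¹ * a) * i⁻¹)
            = b * (i * i * ψ (b⁻¹ * a)) * i⁻¹ by simp [mul_assoc], hcc]
      simp [mul_assoc]
end
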